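/- For every integer n ≥ 0 there exists an involution Ψ of the set M*_n such that: Ψ(μ)=μ if and only if μ∈G_n; for every μ∉G_n, ρ(Ψ(μ)) equals y²q·ρ(μ) or y^{−2}q^{−1}·ρ(μ); and for every μ∈M*_n, the exponent of t in ρ(Ψ(μ)) equals the exponent of t in ρ(μ). Moreover, for every μ∈G_n the exponent of t in ρ(μ) is congruent to n modulo 2. -/

import Mathlib

open Finset

/-- A step of a bicolored Motzkin path: up, down, straight level, wavy level. -/
inductive MStep where
  | U : MStep
  | D : MStep
  | L : MStep
  | W : MStep
deriving DecidableEq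

/-- A weighted bicolored Motzkin path of length `n`: a sequence of steps together
with, for each step, the triple `(a, b, c)` of exponents of its monomial weight
`y^a t^b q^c`. -/
structure WPath (n : ℕ) where
  step : Fin n → MStep
  wt : Fin n → ℕ × ℕ × ℕ

/-- The height increment of a step. -/
def dh : MStep → ℤ
  | MStep.U => 1
  | MStep.D => -1
  | MStep.L => 0
  | MStep.W => 0

/-- The height (of the starting point) of the `j`-th step; `ht μ n` is the final
height. -/
def ht {n : ℕ} (μ : WPath n) (j : ℕ) : ℤ :=
  ∑ k ∈ Finset.range j, if h : k < n then dh (μ.step ⟨k, h⟩) else 0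

/-- The underlying path is a Motzkin path: stays weakly above the `x`-axis and
ends on it. -/
def IsMotzkin {n : ℕ} (μ : WPath n) : Prop :=
  (∀ j ≤ n, 0 ≤ ht μ j) ∧ ht μ n = 0

/-- `y`, as the variable `X 0` of `ℤ[y,t,q]`. -/
noncomputable def yv : MvPolynomial (Fin 3) ℤ := MvPolynomial.X 0

/-- `t`, as the variable `X 1` of `ℤ[y,t,q]`. -/
noncomputable def tv : MvPolynomial (Fin 3) ℤ := MvPolynomial.X 1

/-- `q`, as the variable `X 2` of `ℤ[y,t,q]`. -/
noncomputable def qv : MvPolynomial (Fin 3) ℤ := MvPolynomial.X 2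

/-- The weight `ρ(μ) ∈ ℤ[y,t,q]`: the product of the step weights `y^a t^b q^c`. -/
noncomputable def rho {n : ℕ} (μ : WPath n) : MvPolynomial (Fin 3) ℤ :=
  ∏ j : Fin n, yv ^ (μ.wt j).1 * tv ^ (μ.wt j).2.1 * qv ^ (μ.wt j).2.2

/-- The exponent of `t` in the monomial `ρ(μ)`. -/
def tExp {n : ℕ} (μ : WPath n) : ℕ := ∑ j : Fin n, (μ.wt j).2.1

/-- The weight `w` is `y² q^c` with `lo ≤ c ≤ hi`. -/
def wY2 (w : ℕ × ℕ × ℕ) (lo hi : ℤ) : Prop :=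
  w.1 = 2 ∧ w.2.1 = 0 ∧ lo ≤ (w.2.2 : ℤ) ∧ (w.2.2 : ℤ) ≤ hi

/-- The weight `w` is `y t q^c` with `lo ≤ c ≤ hi`. -/
def wYT (w : ℕ × ℕ × ℕ) (lo hi : ℤ) : Prop :=
  w.1 = 1 ∧ w.2.1 = 1 ∧ lo ≤ (w.2.2 : ℤ) ∧ (w.2.2 : ℤ) ≤ hi

/-- The weight `w` is `q^c` with `lo ≤ c ≤ hi`. -/
def wQ (w : ℕ × ℕ × ℕ) (lo hi : ℤ) : Prop :=
  w.1 = 0 ∧ w.2.1 = 0 ∧ lo ≤ (w.2.2 : ℤ) ∧ (w.2.2 : ℤ) ≤ hi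

/-- `μ ∈ M_n`: no wavy level step on the `x`-axis, and at each step of height
`h`: up and straight level steps carry `y²q^c` (`c ≤ h`) or `ytq^c`
(`h ≤ c ≤ 2h`); wavy level steps (at height `h ≥ 1`) carry `q^c` (`c ≤ h-1`) or
`ytq^c` (`h ≤ c ≤ 2h-1`); down steps at height `h+1` carry `q^c` (`c ≤ h`) or
`ytq^c` (`h+1 ≤ c ≤ 2h+1`). -/
def Mcond {n : ℕ} (μ : WPath n) : Prop :=
  IsMotzkin μ ∧ ∀ j : Fin n,
    (μ.step j = MStep.U →
      wY2 (μ.wt j) 0 (ht μ j) ∨ wYT (μ.wt j) (ht μ j) (2 * ht μ j)) ∧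
    (μ.step j = MStep.L →
      wY2 (μ.wt j) 0 (ht μ j) ∨ wYT (μ.wt j) (ht μ j) (2 * ht μ j)) ∧
    (μ.step j = MStep.W →
      1 ≤ ht μ j ∧
        (wQ (μ.wt j) 0 (ht μ j - 1) ∨ wYT (μ.wt j) (ht μ j) (2 * ht μ j - 1))) ∧
    (μ.step j = MStep.D →
      wQ (μ.wt j) 0 (ht μ j - 1) ∨ wYT (μ.wt j) (ht μ j) (2 * ht μ j - 1))

/-- `μ ∈ H_n`: at each step of height `h`: up steps carry `y²q^c` (`c ≤ h+1`) or
`ytq^c` (`h+1 ≤ c ≤ 2h+2`); straight level steps carry `q^c` (`c ≤ h`) or `ytq^c`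
(`h+1 ≤ c ≤ 2h+1`); wavy level steps carry `y²q^c` (`c ≤ h`) or `ytq^c`
(`h ≤ c ≤ 2h`); down steps at height `h+1` carry `q^c` (`c ≤ h`) or `ytq^c`
(`h+1 ≤ c ≤ 2h+1`). -/
def Hcond {n : ℕ} (μ : WPath n) : Prop :=
  IsMotzkin μ ∧ ∀ j : Fin n,
    (μ.step j = MStep.U →
      wY2 (μ.wt j) 0 (ht μ j + 1) ∨ wYT (μ.wt j) (ht μ j + 1) (2 * ht μ j + 2)) ∧
    (μ.step j = MStep.L →
      wQ (μ.wt j) 0 (ht μ j) ∨ wYT (μ.wt j) (ht μ j + 1) (2 * ht μ j + 1)) ∧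
    (μ.step j = MStep.W →
      wY2 (μ.wt j) 0 (ht μ j) ∨ wYT (μ.wt j) (ht μ j) (2 * ht μ j)) ∧
    (μ.step j = MStep.D →
      wQ (μ.wt j) 0 (ht μ j - 1) ∨ wYT (μ.wt j) (ht μ j) (2 * ht μ j - 1))

/-- The up step `i` and the down step `j` form a matching pair: they face each
other, i.e. the horizontal segment between their midpoints stays under the path. -/
def Matching {n : ℕ} (μ : WPath n) (i j : Fin n) : Prop :=
  (i : ℕ) < (j : ℕ) ∧ μ.step i = MStep.U ∧ μ.step j = MStep.D ∧
    ht μ j = ht μ i + 1 ∧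
    ∀ k : ℕ, (i : ℕ) < k → k < (j : ℕ) → ht μ i + 1 ≤ ht μ k

/-- The defining restrictions of `G_n`: every matching pair at height `h` has
weights `(y²q^a, q^b)` with `a, b ≤ h`, or `(ytq^{h+a}, ytq^{h+1+b})` with
`a, b ≤ h`; every straight level step at height `h` has weight `ytq^c` with
`h ≤ c ≤ 2h`; every wavy level step (at height `h ≥ 1`) has weight `ytq^c` with
`h ≤ c ≤ 2h-1`. -/
def GextraCond {n : ℕ} (μ : WPath n) : Prop :=
  (∀ i j : Fin n, Matching μ i j →
    (wY2 (μ.wt i) 0 (ht μ i) ∧ wQ (μ.wt j) 0 (ht μ i)) ∨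
    (wYT (μ.wt i) (ht μ i) (2 * ht μ i) ∧
      wYT (μ.wt j) (ht μ i + 1) (2 * ht μ i + 1))) ∧
  (∀ j : Fin n, μ.step j = MStep.L →
    wYT (μ.wt j) (ht μ j) (2 * ht μ j)) ∧
  (∀ j : Fin n, μ.step j = MStep.W →
    1 ≤ ht μ j ∧ wYT (μ.wt j) (ht μ j) (2 * ht μ j - 1))

/-- `μ ∈ M*_n`: a path of `M_n` with no straight level step of weight `y²`. -/
def Mstar {n : ℕ} (μ : WPath n) : Prop :=
  Mcond μ ∧ ∀ j : Fin n, μ.step j = MStep.L → μ.wt j ≠ (2, 0, 0)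

/-!
The involution toggles the leftmost *defect* of a path, a position where it violates the
conditions defining `G_n`: a level step whose weight has no `t` (a straight `y²q^(c+1)` and a
wavy `q^c` are exchanged), or an up step whose matching down step carries a different power of
`t` (at height `h`, the pairs `(y²q^a, ytq^(h+1+b))` and `(ytq^(h+a), q^b)` are exchanged).
Such a move keeps the heights, hence the matching, membership in `M*_n` and the set of defects;
it multiplies the weight by `y²q` or its inverse and keeps the power of `t`. As the set of
defects is unchanged, toggling the leftmost one is an involution.

On `G_n` matched steps carry the same power of `t` and level steps carry `t` exactly once, so
the exponent of `t` and the length `n` are both congruent to the number of level steps mod 2.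
-/

open Function

section SwitchAtFirst

open scoped Classical

variable {α ι : Type*} [Fintype ι] [LinearOrder ι] (V : α → ι → Prop) (τ : α → ι → α)

noncomputable def switchAtFirst (a : α) : α :=
  if h : (Finset.univ.filter (V a)).Nonempty then τ a ((Finset.univ.filter (V a)).min' h) else a

theorem switchAtFirst_cases (a : α) :
    ((∀ i, ¬V a i) ∧ switchAtFirst V τ a = a) ∨ ∃ i, V a i ∧ switchAtFirst V τ a = τ a i := by
  by_cases h : (Finset.univ.filter (V a)).Nonempty
  · exact .inr ⟨_, (Finset.mem_filter.1 (Finset.min'_mem _ h)).2, dif_pos h⟩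
  · exact .inl ⟨fun i hi => h ⟨i, by simpa using hi⟩, dif_neg h⟩

theorem switchAtFirst_switchAtFirst {a : α} (hV : ∀ i, V a i → ∀ j, V (τ a i) j ↔ V a j)
    (hτ : ∀ i, V a i → τ (τ a i) i = a) : switchAtFirst V τ (switchAtFirst V τ a) = a := by
  unfold switchAtFirst
  by_cases h : (Finset.univ.filter (V a)).Nonempty
  · have hi := (Finset.mem_filter.1 (Finset.min'_mem _ h)).2
    have hfilter := Finset.filter_congr (s := Finset.univ) fun j _ => hV _ hi j
    simp only [dif_pos h, hfilter]
    exact hτ _ hi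
  · simp only [dif_neg h]

end SwitchAtFirst

section Matching

variable {n : ℕ} {μ ν : WPath n}

theorem WPath.ext (hs : μ.step = ν.step) (hw : μ.wt = ν.wt) : μ = ν := by
  cases μ; cases ν; congr

theorem dh_eq_one_iff {s : MStep} : dh s = 1 ↔ s = .U := by cases s <;> decide

theorem dh_eq_neg_one_iff {s : MStep} : dh s = -1 ↔ s = .D := by cases s <;> decide

theorem neg_one_le_dh (s : MStep) : -1 ≤ dh s := by cases s <;> decide

theorem dh_le_one (s : MStep) : dh s ≤ 1 := by cases s <;> decide

theorem ht_zero (μ : WPath n) : ht μ 0 = 0 := by simp [ht]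

theorem ht_succ (μ : WPath n) (j : Fin n) : ht μ (j + 1) = ht μ j + dh (μ.step j) := by
  simp [ht, Finset.sum_range_succ]

theorem ht_congr (h : ∀ x, dh (ν.step x) = dh (μ.step x)) : ht ν = ht μ := by
  funext j
  refine Finset.sum_congr rfl fun k _ => ?_
  split_ifs with hk
  exacts [h ⟨k, hk⟩, rfl]

theorem matching_congr (h : ∀ x, dh (ν.step x) = dh (μ.step x)) {i j : Fin n} :
    Matching ν i j ↔ Matching μ i j := by
  simp only [Matching, ← dh_eq_one_iff, ← dh_eq_neg_one_iff, h, ht_congr h]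

theorem exists_matching_of_up (hM : IsMotzkin μ) {i : Fin n} (hU : μ.step i = .U) :
    ∃ j, Matching μ i j := by
  have hi : ht μ (i + 1) = ht μ i + 1 := by rw [ht_succ, hU]; rfl
  have hex : ∃ m, (i : ℕ) < m ∧ m ≤ n ∧ ht μ m ≤ ht μ i :=
    ⟨n, i.2, le_rfl, hM.2 ▸ hM.1 i i.2.le⟩
  obtain ⟨m, ⟨him, hmn, hm⟩, hmin⟩ : ∃ m, ((i : ℕ) < m ∧ m ≤ n ∧ ht μ m ≤ ht μ i) ∧
      ∀ k < m, ¬((i : ℕ) < k ∧ k ≤ n ∧ ht μ k ≤ ht μ i) :=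
    ⟨Nat.find hex, Nat.find_spec hex, fun k => Nat.find_min hex⟩
  have above : ∀ k, (i : ℕ) < k → k < m → ht μ i + 1 ≤ ht μ k := fun k h1 h2 => by
    have := hmin k h2
    omega
  obtain ⟨j, rfl⟩ : ∃ j, m = j + 1 := ⟨m - 1, by omega⟩
  have hij : (i : ℕ) < j := by
    by_contra
    obtain rfl : j = i := by omega
    omega
  have hjn : j < n := by omega
  have hstep := ht_succ μ ⟨j, hjn⟩
  have hj := above j hij (by omega)
  have := neg_one_le_dh (μ.step ⟨j, hjn⟩)
  have hD : dh (μ.step ⟨j, hjn⟩) = -1 := by simp only at hstep; omega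
  refine ⟨⟨j, hjn⟩, hij, hU, dh_eq_neg_one_iff.1 hD, ?_,
    fun k h1 h2 => above k h1 (Nat.lt_succ_of_lt h2)⟩
  simp only at hstep ⊢
  omega

theorem exists_matching_of_down (hM : IsMotzkin μ) {j : Fin n} (hD : μ.step j = .D) :
    ∃ i, Matching μ i j := by
  have hj : ht μ (j + 1) = ht μ j - 1 := by rw [ht_succ, hD]; rfl
  have hpos : 1 ≤ ht μ j := by have := hM.1 (j + 1) j.2; omega
  let P k := ht μ k ≤ ht μ j - 1
  have hPi : P (Nat.findGreatest P j) :=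
    Nat.findGreatest_spec (m := 0) (Nat.zero_le _) (by simp [P, ht_zero]; omega)
  set i := Nat.findGreatest P j
  have above : ∀ k, i < k → k ≤ j → ht μ j ≤ ht μ k := fun k h1 h2 => by
    have := Nat.findGreatest_is_greatest h1 h2
    simp only [P] at this
    omega
  have hij : i < j := lt_of_le_of_ne (Nat.findGreatest_le _) fun h => by
    simp only [P, h] at hPi; omega
  have hin : i < n := hij.trans j.2
  have hstep := ht_succ μ ⟨i, hin⟩
  have := above (i + 1) (by omega) hij
  have := dh_le_one (μ.step ⟨i, hin⟩)
  simp only [P] at hPi hstep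
  have hU : dh (μ.step ⟨i, hin⟩) = 1 := by omega
  refine ⟨⟨i, hin⟩, hij, dh_eq_one_iff.1 hU, hD, by simp only; omega, fun k h1 h2 => ?_⟩
  have := above k h1 h2.le
  simp only
  omega

theorem Matching.right_unique {i j j' : Fin n} (h : Matching μ i j) (h' : Matching μ i j') :
    j = j' := by
  have key : ∀ {j j' : Fin n}, Matching μ i j → Matching μ i j' → (j : ℕ) ≤ j' := by
    rintro j j' ⟨-, -, -, hj, habove⟩ ⟨hij', -, hD', hj', -⟩
    by_contra hlt
    have hend : ht μ (j' + 1) = ht μ i := by rw [ht_succ, hD']; simp only [dh]; omega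
    rcases Nat.lt_or_ge (j' + 1) j with hk | hk
    · have := habove (j' + 1) (by omega) hk
      omega
    · have hjj : (j : ℕ) = j' + 1 := by omega
      rw [← hjj] at hend
      omega
  exact Fin.ext (le_antisymm (key h h') (key h' h))

theorem Matching.left_unique {i i' j : Fin n} (h : Matching μ i j) (h' : Matching μ i' j) :
    i = i' := by
  have key : ∀ {i i' : Fin n}, Matching μ i j → Matching μ i' j → (i : ℕ) ≤ i' := by
    rintro i i' ⟨hij, -, -, hi, -⟩ ⟨-, -, -, hi', habove'⟩
    by_contra hlt
    have := habove' i (by omega) hij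
    omega
  exact Fin.ext (le_antisymm (key h h') (key h' h))

theorem Matching.ne {i j : Fin n} (h : Matching μ i j) : i ≠ j := by
  rintro rfl
  exact lt_irrefl _ h.1

end Matching

section Parity

variable {n : ℕ} {μ : WPath n}

open scoped Classical in
noncomputable def partner (μ : WPath n) (i : Fin n) : Fin n :=
  if h : ∃ j, Matching μ i j then h.choose else i

theorem partner_eq {i j : Fin n} (h : Matching μ i j) : partner μ i = j := by
  have hex : ∃ j, Matching μ i j := ⟨j, h⟩
  rw [partner, dif_pos hex]
  exact hex.choose_spec.right_unique h

theorem matching_partner (hM : IsMotzkin μ) {i : Fin n} (hU : μ.step i = .U) :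
    Matching μ i (partner μ i) := by
  obtain ⟨j, h⟩ := exists_matching_of_up hM hU
  rwa [partner_eq h]

theorem sum_up_eq_sum_down {M : Type*} [AddCommMonoid M] (hM : IsMotzkin μ) (f : Fin n → M)
    (hf : ∀ i j, Matching μ i j → f i = f j) :
    ∑ x with μ.step x = .U, f x = ∑ x with μ.step x = .D, f x := by
  refine Finset.sum_nbij (partner μ) (fun x hx => ?_) (fun x hx y hy hxy => ?_)
    (fun y hy => ?_) (fun x hx => ?_)
  · simp only [Finset.mem_filter, Finset.mem_univ, true_and] at hx ⊢
    exact (matching_partner hM hx).2.2.1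
  · simp only [Finset.coe_filter, Finset.mem_univ, true_and, Set.mem_ofPred_eq] at hx hy
    exact (matching_partner hM hx).left_unique (hxy ▸ matching_partner hM hy)
  · simp only [Finset.coe_filter, Finset.mem_univ, true_and, Set.mem_ofPred_eq] at hy
    obtain ⟨x, hx⟩ := exists_matching_of_down hM hy
    exact ⟨x, by simpa using hx.2.1, partner_eq hx⟩
  · simp only [Finset.mem_filter, Finset.mem_univ, true_and] at hx
    exact hf x _ (matching_partner hM hx)

theorem tExp_modEq_of_gextraCond (hM : IsMotzkin μ) (hG : GextraCond μ) :
    tExp μ ≡ n [MOD 2] := by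
  obtain ⟨hpairs, hL, hW⟩ := hG
  set g : Fin n → ℕ := fun x => (μ.wt x).2.1 + 1
  have hsum : tExp μ + n = ∑ x, g x := by simp [g, tExp, Finset.sum_add_distrib]
  have hUD := sum_up_eq_sum_down hM g fun i j hm => by
    rcases hpairs i j hm with ⟨h1, h2⟩ | ⟨h1, h2⟩ <;> simp [g, h1.2.1, h2.2.1]
  have hlevel : Even (∑ x with ¬μ.step x = .U ∧ ¬μ.step x = .D, g x) := by
    refine Finset.even_sum _ fun x hx => ⟨1, ?_⟩
    simp only [Finset.mem_filter, Finset.mem_univ, true_and] at hx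
    cases hs : μ.step x
    · exact absurd hs hx.1
    · exact absurd hs hx.2
    · simp [g, (hL x hs).2.1]
    · simp [g, (hW x hs).2.2.1]
  rw [← Finset.sum_filter_add_sum_filter_not _ (μ.step · = .U),
    ← Finset.sum_filter_add_sum_filter_not (Finset.univ.filter (¬μ.step · = .U)) (μ.step · = .D),
    Finset.filter_filter, Finset.filter_filter,
    Finset.filter_congr (p := fun x => ¬μ.step x = .U ∧ μ.step x = .D) (q := (μ.step · = .D))
      (fun x _ => by cases μ.step x <;> simp), ← hUD] at hsum
  obtain ⟨r, hr⟩ := hlevel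
  simp only [Nat.ModEq]
  omega

end Parity

section Defects

variable {n : ℕ} {μ : WPath n}

def IsDefect (μ : WPath n) (x : Fin n) : Prop :=
  ((μ.step x = .L ∨ μ.step x = .W) ∧ (μ.wt x).2.1 = 0) ∨
    (μ.step x = .U ∧ ∃ j, Matching μ x j ∧ (μ.wt x).2.1 ≠ (μ.wt j).2.1)

theorem GextraCond.not_isDefect (hG : GextraCond μ) (x : Fin n) : ¬IsDefect μ x := by
  obtain ⟨hpairs, hL, hW⟩ := hG
  rintro (⟨hs | hs, h0⟩ | ⟨-, j, hm, hne⟩)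
  · exact absurd h0 (by rw [(hL x hs).2.1]; decide)
  · exact absurd h0 (by rw [(hW x hs).2.2.1]; decide)
  · rcases hpairs x j hm with ⟨h1, h2⟩ | ⟨h1, h2⟩ <;> exact hne (h1.2.1.trans h2.2.1.symm)

theorem gextraCond_of_forall_not_isDefect (hμ : Mcond μ) (h : ∀ x, ¬IsDefect μ x) :
    GextraCond μ := by
  refine ⟨fun i j hm => ?_, fun x hL => ?_, fun x hW => ?_⟩
  · have heq : (μ.wt i).2.1 = (μ.wt j).2.1 := by
      by_contra hne
      exact h i (.inr ⟨hm.2.1, j, hm, hne⟩)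
    have hi := (hμ.2 i).1 hm.2.1
    have hj := (hμ.2 j).2.2.2 hm.2.2.1
    have hht := hm.2.2.2.1
    simp only [wY2, wYT, wQ] at hi hj ⊢
    omega
  · have h0 : (μ.wt x).2.1 ≠ 0 := fun h0 => h x (.inl ⟨.inl hL, h0⟩)
    have hx := (hμ.2 x).2.1 hL
    simp only [wY2, wYT] at hx ⊢
    omega
  · have h0 : (μ.wt x).2.1 ≠ 0 := fun h0 => h x (.inl ⟨.inr hW, h0⟩)
    have hx := (hμ.2 x).2.2.1 hW
    simp only [wQ, wYT] at hx ⊢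
    omega

end Defects

section Weights

variable {n : ℕ} {μ ν : WPath n}

def wtSum (μ : WPath n) : ℕ × ℕ × ℕ := ∑ x, μ.wt x

theorem tExp_eq_wtSum (μ : WPath n) : tExp μ = (wtSum μ).2.1 := by
  simp [tExp, wtSum, Prod.snd_sum, Prod.fst_sum]

theorem rho_eq_wtSum (μ : WPath n) :
    rho μ = yv ^ (wtSum μ).1 * tv ^ (wtSum μ).2.1 * qv ^ (wtSum μ).2.2 := by
  simp [rho, wtSum, Prod.fst_sum, Prod.snd_sum, Finset.prod_mul_distrib,
    Finset.prod_pow_eq_pow_sum]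

theorem rho_eq_of_wtSum_eq (h : wtSum ν = wtSum μ + (2, 0, 1)) :
    rho ν = yv ^ 2 * qv * rho μ := by
  rw [rho_eq_wtSum, rho_eq_wtSum, h]
  simp only [Prod.fst_add, Prod.snd_add, pow_add]
  ring

theorem wtSum_add_eq_of_eqOn_compl (s : Finset (Fin n)) (h : ∀ x ∉ s, ν.wt x = μ.wt x) :
    wtSum ν + ∑ x ∈ s, μ.wt x = wtSum μ + ∑ x ∈ s, ν.wt x := by
  rw [wtSum, wtSum, ← Finset.sum_add_sum_compl s ν.wt, ← Finset.sum_add_sum_compl s μ.wt,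
    Finset.sum_congr rfl fun x hx => h x (Finset.mem_compl.1 hx)]
  abel

end Weights

section Moves

variable {n : ℕ} {μ ν : WPath n} {p : Fin n}

def StepAdmissible (s : MStep) (w : ℕ × ℕ × ℕ) (h : ℤ) : Prop :=
  (s = .U → wY2 w 0 h ∨ wYT w h (2 * h)) ∧
  (s = .L → (wY2 w 0 h ∨ wYT w h (2 * h)) ∧ w ≠ (2, 0, 0)) ∧
  (s = .W → 1 ≤ h ∧ (wQ w 0 (h - 1) ∨ wYT w h (2 * h - 1))) ∧
  (s = .D → wQ w 0 (h - 1) ∨ wYT w h (2 * h - 1))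

theorem mstar_iff : Mstar μ ↔ IsMotzkin μ ∧ ∀ x, StepAdmissible (μ.step x) (μ.wt x) (ht μ x) := by
  simp only [Mstar, Mcond, StepAdmissible, imp_and, forall_and]
  tauto

theorem mstar_iff_of_ht_eq (hh : ht ν = ht μ)
    (h : ∀ x, (ν.step x = μ.step x ∧ ν.wt x = μ.wt x) ∨
      (StepAdmissible (ν.step x) (ν.wt x) (ht μ x) ∧
        StepAdmissible (μ.step x) (μ.wt x) (ht μ x))) :
    Mstar ν ↔ Mstar μ := by
  rw [mstar_iff, mstar_iff, IsMotzkin, IsMotzkin, hh]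
  refine and_congr_right' (forall_congr' fun x => ?_)
  rcases h x with ⟨hs, hw⟩ | ⟨hν, hμ⟩
  · rw [hs, hw]
  · exact iff_of_true hν hμ

inductive Raise (μ ν : WPath n) (p : Fin n) : Prop
  | level (c : ℕ) (hμs : μ.step p = .W) (hμw : μ.wt p = (0, 0, c)) (hc : (c : ℤ) + 1 ≤ ht μ p)
      (hνs : ν.step p = .L) (hνw : ν.wt p = (2, 0, c + 1))
      (heq : ∀ x ≠ p, ν.step x = μ.step x ∧ ν.wt x = μ.wt x)
  | pair (k : Fin n) (h a b : ℕ) (hm : Matching μ p k) (hh : ht μ p = h) (ha : a ≤ h)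
      (hb : b ≤ h) (hμp : μ.wt p = (1, 1, a + h)) (hμk : μ.wt k = (0, 0, b))
      (hνp : ν.wt p = (2, 0, a)) (hνk : ν.wt k = (1, 1, b + h + 1)) (hs : ν.step = μ.step)
      (heq : ∀ x ≠ p, x ≠ k → ν.wt x = μ.wt x)

namespace Raise

theorem dh_step (hr : Raise μ ν p) (x : Fin n) : dh (ν.step x) = dh (μ.step x) := by
  rcases hr with ⟨c, hμs, -, -, hνs, -, heq⟩ | ⟨-, -, -, -, -, -, -, -, -, -, -, -, hs, -⟩
  · rcases eq_or_ne x p with rfl | hx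
    · rw [hμs, hνs]; rfl
    · rw [(heq x hx).1]
  · rw [hs]

theorem ht_eq (hr : Raise μ ν p) : ht ν = ht μ := ht_congr hr.dh_step

theorem wtSum_eq (hr : Raise μ ν p) : wtSum ν = wtSum μ + (2, 0, 1) := by
  rcases hr with ⟨c, -, hμw, -, -, hνw, heq⟩ | ⟨k, h, a, b, hm, -, -, -, hμp, hμk, hνp, hνk, -, heq⟩
  · have := wtSum_add_eq_of_eqOn_compl {p} fun x hx => (heq x (by simpa using hx)).2
    simp only [Finset.sum_singleton, hμw, hνw] at this
    ext <;> simp only [Prod.ext_iff, Prod.fst_add, Prod.snd_add] at this ⊢ <;> omega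
  · have := wtSum_add_eq_of_eqOn_compl {p, k} fun x hx => by
      simp only [Finset.mem_insert, Finset.mem_singleton, not_or] at hx
      exact heq x hx.1 hx.2
    simp only [Finset.sum_pair hm.ne, hμp, hμk, hνp, hνk] at this
    ext <;> simp only [Prod.ext_iff, Prod.fst_add, Prod.snd_add] at this ⊢ <;> omega

theorem tExp_eq (hr : Raise μ ν p) : tExp ν = tExp μ := by
  simp [tExp_eq_wtSum, hr.wtSum_eq]

theorem rho_eq (hr : Raise μ ν p) : rho ν = yv ^ 2 * qv * rho μ :=
  rho_eq_of_wtSum_eq hr.wtSum_eq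

theorem ne (hr : Raise μ ν p) : ν ≠ μ := by
  rintro rfl
  simpa using congrArg Prod.fst hr.wtSum_eq

theorem mstar_iff (hr : Raise μ ν p) : Mstar ν ↔ Mstar μ := by
  refine mstar_iff_of_ht_eq hr.ht_eq fun x => ?_
  rcases hr with ⟨c, hμs, hμw, hc, hνs, hνw, heq⟩ |
    ⟨k, h, a, b, ⟨-, hU, hD, hk, -⟩, hh, ha, hb, hμp, hμk, hνp, hνk, hs, heq⟩
  · rcases eq_or_ne x p with rfl | hx
    · right
      simp [StepAdmissible, hμs, hμw, hνs, hνw, wY2, wYT, wQ]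
      omega
    · exact .inl (heq x hx)
  · rcases eq_or_ne x p with rfl | hx
    · right
      simp [StepAdmissible, hs, hU, hμp, hνp, wY2, wYT, hh]
      omega
    rcases eq_or_ne x k with rfl | hxk
    · right
      simp [StepAdmissible, hs, hD, hμk, hνk, wQ, wYT, hk, hh]
      omega
    · exact .inl ⟨congrFun hs x, heq x hx hxk⟩

end Raise

end Moves

section Toggle

variable {n : ℕ} {μ ν : WPath n} {p : Fin n}

-- At a defect of a path of `M*_n` the subtractions below are exact and this is one of the
-- moves of `Raise`, in one direction or the other; elsewhere its value is irrelevant.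
noncomputable def toggle (μ : WPath n) (p : Fin n) : WPath n :=
  match μ.step p with
  | .W => ⟨update μ.step p .L, update μ.wt p (2, 0, (μ.wt p).2.2 + 1)⟩
  | .L => ⟨update μ.step p .W, update μ.wt p (0, 0, (μ.wt p).2.2 - 1)⟩
  | .U =>
    let h := (ht μ p).toNat
    let k := partner μ p
    if (μ.wt p).2.1 = 0 then
      ⟨μ.step, update (update μ.wt p (1, 1, (μ.wt p).2.2 + h)) k (0, 0, (μ.wt k).2.2 - (h + 1))⟩
    else
      ⟨μ.step, update (update μ.wt p (2, 0, (μ.wt p).2.2 - h)) k (1, 1, (μ.wt k).2.2 + h + 1)⟩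
  | .D => μ

theorem Raise.toggle_eq (hr : Raise μ ν p) : toggle μ p = ν := by
  rcases hr with ⟨c, hμs, hμw, -, hνs, hνw, heq⟩ |
    ⟨k, h, a, b, hm, hh, -, -, hμp, hμk, hνp, hνk, hs, heq⟩
  · simp only [toggle, hμs, hμw]
    refine WPath.ext (funext fun x => ?_) (funext fun x => ?_) <;>
      rcases eq_or_ne x p with rfl | hx <;> simp [*]
  · simp only [toggle, hm.2.1, hμp, partner_eq hm, hh, hμk]
    refine WPath.ext hs.symm (funext fun x => ?_)
    rcases eq_or_ne x p with rfl | hx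
    · simp [hm.ne, hνp]
    rcases eq_or_ne x k with rfl | hxk
    · simp [hνk]
    · simp [*]

theorem Raise.toggle_eq_symm (hr : Raise μ ν p) : toggle ν p = μ := by
  have hpartner : ∀ k, Matching μ p k → partner ν p = k := fun k hm =>
    partner_eq ((matching_congr hr.dh_step).2 hm)
  have hht := hr.ht_eq
  rcases hr with ⟨c, hμs, hμw, -, hνs, hνw, heq⟩ |
    ⟨k, h, a, b, hm, hh, -, -, hμp, hμk, hνp, hνk, hs, heq⟩
  · simp only [toggle, hνs, hνw]
    refine WPath.ext (funext fun x => ?_) (funext fun x => ?_) <;>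
      rcases eq_or_ne x p with rfl | hx <;> simp [*]
  · simp only [toggle, hs, hm.2.1, hνp, hpartner k hm, hht, hh, hνk, if_true,
      Int.toNat_natCast]
    refine WPath.ext rfl (funext fun x => ?_)
    rcases eq_or_ne x p with rfl | hx
    · simp [hm.ne, hμp]
    rcases eq_or_ne x k with rfl | hxk
    · simp [hμk]
    · simp [*]

theorem isDefect_congr {x : Fin n} (hm : ∀ j, Matching ν x j ↔ Matching μ x j)
    (hs : ν.step x = μ.step x) (hw : ν.wt x = μ.wt x)
    (hj : ∀ j, Matching μ x j → ν.wt j = μ.wt j) : IsDefect ν x ↔ IsDefect μ x := by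
  simp only [IsDefect, hs, hw, hm]
  exact or_congr_right (and_congr_right fun _ =>
    exists_congr fun j => and_congr_right fun hxj => by rw [hj j hxj])

theorem not_isDefect_of_down {x : Fin n} (hD : μ.step x = .D) : ¬IsDefect μ x := by
  simp [IsDefect, hD]

theorem Raise.isDefect_iff (hr : Raise μ ν p) (x : Fin n) : IsDefect ν x ↔ IsDefect μ x := by
  have hmatch : ∀ i j, Matching ν i j ↔ Matching μ i j := fun _ _ => matching_congr hr.dh_step
  rcases hr with ⟨c, hμs, hμw, -, hνs, hνw, heq⟩ |
    ⟨k, h, a, b, hm, -, -, -, hμp, hμk, hνp, hνk, hs, heq⟩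
  · rcases eq_or_ne x p with rfl | hx
    · exact iff_of_true (.inl ⟨.inl hνs, by simp [hνw]⟩) (.inl ⟨.inr hμs, by simp [hμw]⟩)
    refine isDefect_congr (hmatch x) (heq x hx).1 (heq x hx).2 fun j hxj => (heq j ?_).2
    rintro rfl
    exact nomatch hμs.symm.trans hxj.2.2.1
  · have hνU : ν.step p = .U := (congrFun hs p).trans hm.2.1
    rcases eq_or_ne x p with rfl | hx
    · exact iff_of_true (.inr ⟨hνU, k, (hmatch x k).2 hm, by simp [hνp, hνk]⟩)
        (.inr ⟨hm.2.1, k, hm, by simp [hμp, hμk]⟩)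
    rcases eq_or_ne x k with rfl | hxk
    · exact iff_of_false (not_isDefect_of_down ((congrFun hs x).trans hm.2.2.1))
        (not_isDefect_of_down hm.2.2.1)
    refine isDefect_congr (hmatch x) (congrFun hs x) (heq x hx hxk) fun j hxj => heq j ?_ ?_
    · rintro rfl
      exact nomatch hm.2.1.symm.trans hxj.2.2.1
    · rintro rfl
      exact hx (hxj.left_unique hm)

theorem exists_raise_of_level_defect (hμ : Mstar μ) (hs : μ.step p = .L ∨ μ.step p = .W)
    (h0 : (μ.wt p).2.1 = 0) : ∃ ν, Raise μ ν p ∨ Raise ν μ p := by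
  have hadm := (mstar_iff.1 hμ).2 p
  rcases hw : μ.wt p with ⟨a, t, c⟩
  rw [hw] at h0 hadm
  subst h0
  rcases hs with hL | hW
  · have hc := hadm.2.1 hL
    simp [wY2, wYT] at hc
    obtain ⟨rfl, c, rfl, hbound⟩ : a = 2 ∧ ∃ c', c = c' + 1 ∧ (c' : ℤ) + 1 ≤ ht μ p :=
      ⟨by omega, c - 1, by omega, by omega⟩
    let ν : WPath n := ⟨update μ.step p .W, update μ.wt p (0, 0, c)⟩
    have hht : ht ν = ht μ := ht_congr fun x => by
      rcases eq_or_ne x p with rfl | hx <;> simp [ν, dh, *]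
    exact ⟨ν, .inr (.level c (by simp [ν]) (by simp [ν]) (hht ▸ hbound) hL hw
      fun x hx => by simp [ν, hx])⟩
  · have hc := hadm.2.2.1 hW
    simp [wQ, wYT] at hc
    obtain rfl : a = 0 := by omega
    exact ⟨⟨update μ.step p .L, update μ.wt p (2, 0, c + 1)⟩,
      .inl (.level c hW hw (by omega) (by simp) (by simp) fun x hx => by simp [hx])⟩

theorem exists_raise_of_pair_defect (hμ : Mstar μ) {k : Fin n} (hm : Matching μ p k)
    (hne : (μ.wt p).2.1 ≠ (μ.wt k).2.1) : ∃ ν, Raise μ ν p ∨ Raise ν μ p := by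
  have hadm := (mstar_iff.1 hμ).2
  have hp := (hadm p).1 hm.2.1
  have hk := (hadm k).2.2.2 hm.2.2.1
  obtain ⟨h, hh⟩ : ∃ h : ℕ, ht μ p = h := ⟨_, (Int.toNat_of_nonneg (hμ.1.1.1 p p.2.le)).symm⟩
  rw [hm.2.2.2.1, hh] at hk
  rw [hh] at hp
  have hpk := hm.ne
  rcases hwp : μ.wt p with ⟨a₁, t₁, c₁⟩
  rcases hwk : μ.wt k with ⟨a₂, t₂, c₂⟩
  rw [hwp, hwk] at hne
  rw [hwp] at hp
  rw [hwk] at hk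
  simp only [wY2, wYT, wQ, Nat.cast_nonneg, Nat.cast_le, Nat.cast_lt, true_and, ne_eq,
    add_sub_cancel_right, Order.add_one_le_iff, Order.le_sub_one_iff] at hp hk hne
  rcases hp with ⟨rfl, rfl, hc₁⟩ | ⟨rfl, rfl, hc₁⟩
  · obtain ⟨rfl, rfl, b, rfl, hb⟩ : a₂ = 1 ∧ t₂ = 1 ∧ ∃ b, c₂ = b + h + 1 ∧ b ≤ h :=
      ⟨by omega, by omega, c₂ - (h + 1), by omega, by omega⟩
    refine ⟨⟨μ.step, update (update μ.wt p (1, 1, c₁ + h)) k (0, 0, b)⟩,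
      .inr (.pair k h c₁ b hm hh (by omega) hb ?_ ?_ hwp hwk rfl fun x hx hxk => ?_)⟩ <;>
      simp [*]
  · obtain ⟨rfl, rfl, hb⟩ : a₂ = 0 ∧ t₂ = 0 ∧ c₂ ≤ h := ⟨by omega, by omega, by omega⟩
    obtain ⟨a, rfl, ha⟩ : ∃ a, c₁ = a + h ∧ a ≤ h := ⟨c₁ - h, by omega, by omega⟩
    refine ⟨⟨μ.step, update (update μ.wt p (2, 0, a)) k (1, 1, c₂ + h + 1)⟩,
      .inl (.pair k h a c₂ hm hh ha hb hwp hwk ?_ ?_ rfl fun x hx hxk => ?_)⟩ <;>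
      simp [*]

theorem raise_toggle_or_raise (hμ : Mstar μ) (hd : IsDefect μ p) :
    Raise μ (toggle μ p) p ∨ Raise (toggle μ p) μ p := by
  obtain ⟨ν, hr | hr⟩ : ∃ ν, Raise μ ν p ∨ Raise ν μ p := by
    rcases hd with ⟨hs, h0⟩ | ⟨-, k, hm, hne⟩
    exacts [exists_raise_of_level_defect hμ hs h0, exists_raise_of_pair_defect hμ hm hne]
  · exact .inl (hr.toggle_eq ▸ hr)
  · exact .inr (hr.toggle_eq_symm ▸ hr)

theorem mstar_toggle (hμ : Mstar μ) (hd : IsDefect μ p) : Mstar (toggle μ p) :=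
  (raise_toggle_or_raise hμ hd).elim (fun hr => hr.mstar_iff.2 hμ) fun hr => hr.mstar_iff.1 hμ

theorem toggle_toggle (hμ : Mstar μ) (hd : IsDefect μ p) : toggle (toggle μ p) p = μ :=
  (raise_toggle_or_raise hμ hd).elim Raise.toggle_eq_symm Raise.toggle_eq

theorem isDefect_toggle_iff (hμ : Mstar μ) (hd : IsDefect μ p) (x : Fin n) :
    IsDefect (toggle μ p) x ↔ IsDefect μ x :=
  (raise_toggle_or_raise hμ hd).elim (·.isDefect_iff x) fun hr => (hr.isDefect_iff x).symm

theorem toggle_ne (hμ : Mstar μ) (hd : IsDefect μ p) : toggle μ p ≠ μ :=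
  (raise_toggle_or_raise hμ hd).elim Raise.ne fun hr => hr.ne.symm

theorem rho_toggle (hμ : Mstar μ) (hd : IsDefect μ p) :
    rho (toggle μ p) = yv ^ 2 * qv * rho μ ∨ yv ^ 2 * qv * rho (toggle μ p) = rho μ :=
  (raise_toggle_or_raise hμ hd).imp Raise.rho_eq fun hr => hr.rho_eq.symm

theorem tExp_toggle (hμ : Mstar μ) (hd : IsDefect μ p) : tExp (toggle μ p) = tExp μ :=
  (raise_toggle_or_raise hμ hd).elim Raise.tExp_eq fun hr => hr.tExp_eq.symm

end Toggle

/-- Proposition 4.5 (with the observations in the proof of Theorem 1.4(ii)):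
there is an involution `Ψ` of `M*_n` whose fixed points are exactly the paths of
`G_n`, which changes the weight of a non-fixed path by a factor `y²q` or
`y^{-2}q^{-1}`, and which preserves the exponent of `t` of the weight; moreover
the exponent of `t` of the weight of every path of `G_n` is congruent to `n`
modulo 2. -/
theorem statement17 (n : ℕ) :
    ∃ Ψ : WPath n → WPath n,
      (∀ μ : WPath n, Mstar μ → Mstar (Ψ μ)) ∧
      (∀ μ : WPath n, Mstar μ → Ψ (Ψ μ) = μ) ∧
      (∀ μ : WPath n, Mstar μ → (Ψ μ = μ ↔ GextraCond μ)) ∧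
      (∀ μ : WPath n, Mstar μ → ¬ GextraCond μ →
        rho (Ψ μ) = yv ^ 2 * qv * rho μ ∨ yv ^ 2 * qv * rho (Ψ μ) = rho μ) ∧
      (∀ μ : WPath n, Mstar μ → tExp (Ψ μ) = tExp μ) ∧
      (∀ μ : WPath n, Mstar μ → GextraCond μ → tExp μ ≡ n [MOD 2]) := by
  refine ⟨switchAtFirst IsDefect toggle, fun μ hμ => ?_, fun μ hμ => ?_, fun μ hμ => ?_,
    fun μ hμ hG => ?_, fun μ hμ => ?_, fun μ hμ hG => tExp_modEq_of_gextraCond hμ.1.1 hG⟩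
  · rcases switchAtFirst_cases IsDefect toggle μ with ⟨-, hΨ⟩ | ⟨p, hp, hΨ⟩ <;> rw [hΨ]
    exacts [hμ, mstar_toggle hμ hp]
  · exact switchAtFirst_switchAtFirst _ _ (fun p hp => isDefect_toggle_iff hμ hp)
      fun p hp => toggle_toggle hμ hp
  · rcases switchAtFirst_cases IsDefect toggle μ with ⟨hnd, hΨ⟩ | ⟨p, hp, hΨ⟩
    · exact iff_of_true hΨ (gextraCond_of_forall_not_isDefect hμ.1 hnd)
    · rw [hΨ]
      exact iff_of_false (toggle_ne hμ hp) fun hG => hG.not_isDefect p hp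
  · rcases switchAtFirst_cases IsDefect toggle μ with ⟨hnd, -⟩ | ⟨p, hp, hΨ⟩
    · exact absurd (gextraCond_of_forall_not_isDefect hμ.1 hnd) hG
    · rw [hΨ]
      exact rho_toggle hμ hp
  · rcases switchAtFirst_cases IsDefect toggle μ with ⟨-, hΨ⟩ | ⟨p, hp, hΨ⟩ <;> rw [hΨ]
    exact tExp_toggle hμ hp
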